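/- Let S be a distributive inverse semigroup with a ∨ b existing and c ∧ (a ∨ b) existing. Then c ∧ a and c ∧ b exist, (c ∧ a) ∨ (c ∧ b) exists, and c ∧ (a ∨ b) = (c ∧ a) ∨ (c ∧ b). -/
import Mathlib


class InvSemigroup (S : Type*) extends Mul S, Inv S where
  mul_assoc : ∀ a b c : S, a * b * c = a * (b * c)
  mul_inv_mul : ∀ a : S, a * a⁻¹ * a = a
  inv_mul_inv : ∀ a : S, a⁻¹ * a * a⁻¹ = a⁻¹
  idem_comm : ∀ e f : S, e * e = e → f * f = f → e * f = f * e

/-- The natural partial order on an inverse semigroup: `a ≤ b` iff `a = b * (a⁻¹ * a)`. -/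
def nle {S : Type*} [InvSemigroup S] (a b : S) : Prop := a = b * (a⁻¹ * a)

def IsIdem {S : Type*} [Mul S] (e : S) : Prop := e * e = e

/-- Two elements are compatible if `a⁻¹ * b` and `a * b⁻¹` are idempotents. -/
def Compat {S : Type*} [InvSemigroup S] (a b : S) : Prop :=
  IsIdem (a⁻¹ * b) ∧ IsIdem (a * b⁻¹)

def PairwiseCompat {S : Type*} [InvSemigroup S] (X : Set S) : Prop :=
  ∀ a ∈ X, ∀ b ∈ X, Compat a b

/-- `s` is the join (least upper bound) of `X` with respect to the natural partial order. -/
def IsJoin {S : Type*} [InvSemigroup S] (X : Set S) (s : S) : Prop :=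
  (∀ a ∈ X, nle a s) ∧ ∀ u : S, (∀ a ∈ X, nle a u) → nle s u

/-- A distributive inverse semigroup: finite (binary) compatible joins exist and
multiplication distributes over them. -/
class DistInvSemigroup (S : Type*) extends InvSemigroup S where
  join2 : ∀ a b : S, Compat a b → ∃ j : S, IsJoin {a, b} j
  distl : ∀ a b j c : S, IsJoin {a, b} j → IsJoin {c * a, c * b} (c * j)
  distr : ∀ a b j c : S, IsJoin {a, b} j → IsJoin {a * c, b * c} (j * c)

def downSet {S : Type*} [InvSemigroup S] (a : S) : Set S := {x | nle x a}

def IsOrderIdeal {S : Type*} [InvSemigroup S] (A : Set S) : Prop :=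
  ∀ a ∈ A, ∀ x : S, nle x a → x ∈ A

/-- `m` is the meet of `x` and `y` in the natural partial order. -/
def IsMeet {S : Type*} [InvSemigroup S] (x y m : S) : Prop :=
  nle m x ∧ nle m y ∧ ∀ z : S, nle z x → nle z y → nle z m


namespace Aux
variable {S : Type*} [InvSemigroup S]

instance : Semigroup S := ⟨InvSemigroup.mul_assoc⟩

lemma mim (a : S) : a * a⁻¹ * a = a := InvSemigroup.mul_inv_mul a
lemma imi (a : S) : a⁻¹ * a * a⁻¹ = a⁻¹ := InvSemigroup.inv_mul_inv a
lemma icomm {e f : S} (he : IsIdem e) (hf : IsIdem f) : e * f = f * e :=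
  InvSemigroup.idem_comm e f he hf

lemma idem_im (a : S) : IsIdem (a⁻¹ * a) := by
  unfold IsIdem
  calc a⁻¹*a*(a⁻¹*a) = (a⁻¹*a*a⁻¹)*a := by simp [mul_assoc]
  _ = a⁻¹*a := by rw [imi]

lemma idem_mi (a : S) : IsIdem (a * a⁻¹) := by
  unfold IsIdem
  calc a*a⁻¹*(a*a⁻¹) = (a*a⁻¹*a)*a⁻¹ := by simp [mul_assoc]
  _ = a*a⁻¹ := by rw [mim]

lemma inv_unique {s x y : S} (h1 : s*x*s = s) (h2 : x*s*x = x)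
    (h3 : s*y*s = s) (h4 : y*s*y = y) : x = y := by
  have hsx : IsIdem (s*x) := by
    unfold IsIdem
    calc s*x*(s*x) = (s*x*s)*x := by simp [mul_assoc]
    _ = s*x := by rw [h1]
  have hsy : IsIdem (s*y) := by
    unfold IsIdem
    calc s*y*(s*y) = (s*y*s)*y := by simp [mul_assoc]
    _ = s*y := by rw [h3]
  have hxs : IsIdem (x*s) := by
    unfold IsIdem
    calc x*s*(x*s) = (x*s*x)*s := by simp [mul_assoc]
    _ = x*s := by rw [h2]
  have hys : IsIdem (y*s) := by
    unfold IsIdem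
    calc y*s*(y*s) = (y*s*y)*s := by simp [mul_assoc]
    _ = y*s := by rw [h4]
  have e1 : x = x*s*y := by
    calc x = x*s*x := h2.symm
    _ = x*(s*y*s)*x := by rw [h3]
    _ = x*((s*y)*(s*x)) := by simp [mul_assoc]
    _ = x*((s*x)*(s*y)) := by rw [icomm hsy hsx]
    _ = (x*s*x)*(s*y) := by simp [mul_assoc]
    _ = x*(s*y) := by rw [h2]
    _ = x*s*y := by simp [mul_assoc]
  have e2 : y = x*s*y := by
    calc y = y*s*y := h4.symm
    _ = y*(s*x*s)*y := by rw [h1]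
    _ = ((y*s)*(x*s))*y := by simp [mul_assoc]
    _ = ((x*s)*(y*s))*y := by rw [icomm hys hxs]
    _ = x*s*(y*s*y) := by simp [mul_assoc]
    _ = x*s*y := by rw [h4]
  rw [e1, ← e2]

lemma inv_inv (a : S) : (a⁻¹)⁻¹ = a :=
  inv_unique (mim a⁻¹) (imi a⁻¹) (imi a) (mim a)

lemma mul_inv_rev (a b : S) : (a*b)⁻¹ = b⁻¹*a⁻¹ := by
  refine inv_unique (mim (a*b)) (imi (a*b)) ?_ ?_
  · calc a*b*(b⁻¹*a⁻¹)*(a*b) = a*((b*b⁻¹)*(a⁻¹*a))*b := by simp [mul_assoc]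
    _ = a*((a⁻¹*a)*(b*b⁻¹))*b := by rw [icomm (idem_mi b) (idem_im a)]
    _ = (a*a⁻¹*a)*(b*b⁻¹*b) := by simp [mul_assoc]
    _ = a*b := by rw [mim, mim]
  · calc b⁻¹*a⁻¹*(a*b)*(b⁻¹*a⁻¹) = b⁻¹*((a⁻¹*a)*(b*b⁻¹))*a⁻¹ := by simp [mul_assoc]
    _ = b⁻¹*((b*b⁻¹)*(a⁻¹*a))*a⁻¹ := by rw [icomm (idem_im a) (idem_mi b)]
    _ = (b⁻¹*b*b⁻¹)*(a⁻¹*a*a⁻¹) := by simp [mul_assoc]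
    _ = b⁻¹*a⁻¹ := by rw [imi, imi]

lemma nle_refl (a : S) : nle a a := by
  unfold nle; rw [← mul_assoc, mim]

/-- if z ≤ y then z⁻¹z = y⁻¹y * z⁻¹z -/
lemma nle_idem {z y : S} (h : nle z y) : z⁻¹ * z = (y⁻¹ * y) * (z⁻¹ * z) := by
  have hz : z = y * (z⁻¹ * z) := h
  calc z⁻¹ * z = (y * (z⁻¹*z))⁻¹ * (y * (z⁻¹*z)) := by rw [← hz]
  _ = ((z⁻¹*z)⁻¹ * y⁻¹) * (y * (z⁻¹*z)) := by rw [mul_inv_rev]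
  _ = ((z⁻¹*z) * y⁻¹) * (y * (z⁻¹*z)) := by rw [mul_inv_rev, inv_inv]
  _ = (z⁻¹*z) * ((y⁻¹*y) * (z⁻¹*z)) := by simp [mul_assoc]
  _ = (y⁻¹*y) * ((z⁻¹*z) * (z⁻¹*z)) := by
        rw [← mul_assoc, icomm (idem_im z) (idem_im y), mul_assoc]
  _ = (y⁻¹*y) * (z⁻¹*z) := by rw [idem_im z]

lemma nle_trans {z y x : S} (h1 : nle z y) (h2 : nle y x) : nle z x := by
  unfold nle
  calc z = y * (z⁻¹*z) := h1
  _ = (x * (y⁻¹*y)) * (z⁻¹*z) := by rw [← h2]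
  _ = x * ((y⁻¹*y) * (z⁻¹*z)) := by rw [mul_assoc]
  _ = x * (z⁻¹*z) := by rw [← nle_idem h1]

end Aux


lemma nle_mul_idem {S : Type*} [InvSemigroup S] (a : S) {e : S}
    (he : IsIdem e) (hee : e⁻¹ = e) : nle (a*e) a := by
  show a*e = a*((a*e)⁻¹*(a*e))
  have h : a*((a*e)⁻¹*(a*e)) = a*e := by
    rw [Aux.mul_inv_rev, hee]
    calc a*((e*a⁻¹)*(a*e)) = a*((e*(a⁻¹*a))*e) := by simp [mul_assoc]
    _ = a*(((a⁻¹*a)*e)*e) := by rw [Aux.icomm he (Aux.idem_im a)]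
    _ = a*((a⁻¹*a)*(e*e)) := by simp [mul_assoc]
    _ = a*((a⁻¹*a)*e) := by rw [he]
    _ = a*a⁻¹*a*e := by simp [mul_assoc]
    _ = a*e := by rw [Aux.mim]
  exact h.symm

/-- In a distributive inverse semigroup, if `a ∨ b` exists and `c ∧ (a ∨ b)`
exists, then `c ∧ a` and `c ∧ b` exist, their join exists, and
`c ∧ (a ∨ b) = (c ∧ a) ∨ (c ∧ b)`. -/
theorem stmt14 {S : Type*} [DistInvSemigroup S] (a b c j m : S)
    (hab : Compat a b) (hj : IsJoin {a, b} j) (hm : IsMeet c j m) :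
    ∃ ma mb : S, IsMeet c a ma ∧ IsMeet c b mb ∧ IsJoin {ma, mb} m := by
  have hee : (m⁻¹*m)⁻¹ = m⁻¹*m := by rw [Aux.mul_inv_rev, Aux.inv_inv]
  have he : IsIdem (m⁻¹*m) := Aux.idem_im m
  have hmc : nle m c := hm.1
  have hmj : nle m j := hm.2.1
  have hmje : m = j * (m⁻¹*m) := hmj
  have haj : nle a j := hj.1 a (by simp)
  have hbj : nle b j := hj.1 b (by simp)
  have hjoin : IsJoin {a*(m⁻¹*m), b*(m⁻¹*m)} m := by
    have h := DistInvSemigroup.distr a b j (m⁻¹*m) hj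
    rwa [← hmje] at h
  have key : ∀ x : S, nle x j → nle (x*(m⁻¹*m)) m → IsMeet c x (x*(m⁻¹*m)) := by
    intro x hxj hxm
    refine ⟨Aux.nle_trans hxm hmc, nle_mul_idem x he hee, ?_⟩
    intro z hzc hzx
    have hzm : nle z m := hm.2.2 z hzc (Aux.nle_trans hzx hxj)
    show z = x*(m⁻¹*m)*(z⁻¹*z)
    calc z = x*(z⁻¹*z) := hzx
    _ = x*((m⁻¹*m)*(z⁻¹*z)) := by rw [← Aux.nle_idem hzm]
    _ = x*(m⁻¹*m)*(z⁻¹*z) := by simp [mul_assoc]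
  have h1 : nle (a*(m⁻¹*m)) m := hjoin.1 _ (by simp)
  have h2 : nle (b*(m⁻¹*m)) m := hjoin.1 _ (by simp)
  exact ⟨_, _, key a haj h1, key b hbj h2, hjoin⟩
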